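/- Polynomial inverse trace inequality: for every natural number N and every real polynomial p of degree at most N, |p(1)|² ≤ ((N+1)²/2)·∫_{-1}^{1} p(x)² dx. -/

import Mathlib

/-!
Expand `p` in the Legendre polynomials `P₀, …, P_N`. They are orthogonal on `[-1, 1]` with
`P_k(1) = 1` and `∫ P_k² = 2 / (2k + 1)`, so for `p = ∑ c_k P_k` we get `p(1) = ∑ c_k` and
`∫ p² = ∑ c_k² / ((2k + 1) / 2)`. Cauchy–Schwarz in Sedrakyan's form then bounds `p(1)²` by
`(∑_{k ≤ N} (2k + 1) / 2) ∫ p² = ((N + 1)² / 2) ∫ p²`.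

The Legendre facts come from Rodrigues' formula `P_n = (2ⁿ n!)⁻¹ Dⁿ (X² - 1)ⁿ`: the lower
derivatives of `(X² - 1)ⁿ` vanish at `±1`, so `n` integrations by parts move `Dⁿ` onto the other
factor, and `∫ (1 - x²)ⁿ = 2 ⋅ 4ⁿ (n!)² / (2n + 1)!` follows from a one-step recursion.
-/

open Polynomial
open scoped Nat

namespace Polynomial

section IteratedDerivative

variable {R : Type*}

theorem eval_iterate_derivative_X_sub_C_pow_mul [CommRing R] (n : ℕ) (t : R) (q : R[X]) :
    (derivative^[n] ((X - C t) ^ n * q)).eval t = n ! * q.eval t := by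
  rw [iterate_derivative_mul, eval_finsetSum, Finset.sum_eq_single_of_mem 0 (by simp)]
  · simp [iterate_derivative_X_sub_pow_self]
  · intro k hk hk0
    rw [iterate_derivative_X_sub_pow, Nat.sub_sub_self (Finset.mem_range_succ_iff.mp hk)]
    simp [zero_pow hk0]

variable [Semiring R] {p : R[X]}

theorem Monic.coeff_iterate_derivative_natDegree_sub (hp : p.Monic) (k : ℕ)
    (hk : k ≤ p.natDegree) :
    (derivative^[k] p).coeff (p.natDegree - k) = p.natDegree.descFactorial k := by
  rw [coeff_iterate_derivative, Nat.sub_add_cancel hk, hp.coeff_natDegree, nsmul_one]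

variable [CharZero R]

theorem Monic.degree_iterate_derivative (hp : p.Monic) {k : ℕ} (hk : k ≤ p.natDegree) :
    (derivative^[k] p).degree = (p.natDegree - k : ℕ) := by
  refine degree_eq_of_le_of_coeff_ne_zero ?_ ?_
  · exact degree_le_of_natDegree_le (natDegree_iterate_derivative p k)
  · rw [hp.coeff_iterate_derivative_natDegree_sub k hk, Nat.cast_ne_zero]
    exact (Nat.descFactorial_pos.mpr hk).ne'

theorem Monic.iterate_derivative_natDegree (hp : p.Monic) :
    derivative^[p.natDegree] p = C (p.natDegree ! : R) := by
  have h := hp.degree_iterate_derivative le_rfl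
  rw [Nat.sub_self, Nat.cast_zero] at h
  rw [eq_C_of_degree_eq_zero h, ← Nat.sub_self p.natDegree,
    hp.coeff_iterate_derivative_natDegree_sub _ le_rfl, Nat.descFactorial_self]

end IteratedDerivative

section Integral

variable (a b : ℝ)

noncomputable def integralOn : ℝ[X] →ₗ[ℝ] ℝ where
  toFun p := ∫ x in a..b, p.eval x
  map_add' p q := by
    simpa using intervalIntegral.integral_add (p.continuous.intervalIntegrable a b)
      (q.continuous.intervalIntegrable a b)
  map_smul' c p := by simp [intervalIntegral.integral_const_mul]

theorem integralOn_apply (p : ℝ[X]) : integralOn a b p = ∫ x in a..b, p.eval x := rfl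

theorem integralOn_derivative (p : ℝ[X]) :
    integralOn a b (derivative p) = p.eval b - p.eval a :=
  intervalIntegral.integral_eq_sub_of_hasDerivAt (fun x _ => p.hasDerivAt x)
    ((derivative p).continuous.intervalIntegrable a b)

theorem integralOn_derivative_mul (p q : ℝ[X]) :
    integralOn a b (derivative p * q) =
      p.eval b * q.eval b - p.eval a * q.eval a - integralOn a b (p * derivative q) := by
  have h := integralOn_derivative a b (p * q)
  rw [derivative_mul, map_add, eval_mul, eval_mul] at h
  linarith

noncomputable def l2Form : LinearMap.BilinForm ℝ ℝ[X] :=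
  (LinearMap.mul ℝ ℝ[X]).compr₂ (integralOn a b)

theorem l2Form_apply (p q : ℝ[X]) : l2Form a b p q = integralOn a b (p * q) := rfl

variable {a b}

theorem integralOn_iterate_derivative_mul {n : ℕ} {f : ℝ[X]}
    (hf : ∀ k < n, (derivative^[k] f).eval a = 0 ∧ (derivative^[k] f).eval b = 0) (q : ℝ[X]) :
    integralOn a b (derivative^[n] f * q) = (-1) ^ n * integralOn a b (f * derivative^[n] q) := by
  induction n generalizing q with
  | zero => simp
  | succ n ih =>
    obtain ⟨ha, hb⟩ := hf n n.lt_succ_self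
    rw [Function.iterate_succ_apply', integralOn_derivative_mul, ha, hb,
      ih (fun k hk => hf k (Nat.lt_succ_of_lt hk)), ← Function.iterate_succ_apply]
    ring

end Integral

end Polynomial

theorem LinearMap.IsOrthoᵢ.apply_sum_smul_sum_smul {R M ι : Type*} [CommSemiring R]
    [AddCommMonoid M] [Module R M] {B : LinearMap.BilinForm R M} {v : ι → M} (hv : B.IsOrthoᵢ v)
    (s : Finset ι) (c : ι → R) :
    B (∑ i ∈ s, c i • v i) (∑ i ∈ s, c i • v i) = ∑ i ∈ s, c i ^ 2 * B (v i) (v i) := by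
  classical
  simp only [map_sum, LinearMap.sum_apply, map_smul, LinearMap.smul_apply, smul_eq_mul]
  refine Finset.sum_congr rfl fun i hi => ?_
  rw [Finset.sum_eq_single_of_mem i hi fun j _ hji => by rw [hv hji, mul_zero]]
  ring

theorem Finset.sum_range_two_mul_add_one_div_two (n : ℕ) :
    ∑ k ∈ Finset.range n, (2 * k + 1 : ℝ) / 2 = n ^ 2 / 2 := by
  induction n with
  | zero => simp
  | succ n ih => rw [Finset.sum_range_succ, ih]; push_cast; ring

namespace Polynomial

section XSqSubOnePow

variable {R : Type*} [CommRing R]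

theorem monic_X_sq_sub_one : (X ^ 2 - 1 : R[X]).Monic := by
  simpa using monic_X_pow_sub_C (1 : R) two_ne_zero

theorem natDegree_X_sq_sub_one_pow [Nontrivial R] (n : ℕ) :
    ((X ^ 2 - 1 : R[X]) ^ n).natDegree = 2 * n := by
  rw [monic_X_sq_sub_one.natDegree_pow, ← C_1, natDegree_sub_C, natDegree_X_pow, mul_comm]

theorem eval_iterate_derivative_X_sq_sub_one_pow {k n : ℕ} (hk : k < n) {x : R} (hx : x ^ 2 = 1) :
    (derivative^[k] ((X ^ 2 - 1 : R[X]) ^ n)).eval x = 0 := by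
  obtain ⟨q, hq⟩ := pow_sub_dvd_iterate_derivative_pow (X ^ 2 - 1 : R[X]) n k
  rw [hq, eval_mul, eval_pow]
  simp [hx, Nat.sub_ne_zero_of_lt hk]

end XSqSubOnePow

theorem integralOn_one_sub_X_sq_pow_succ (n : ℕ) :
    (2 * n + 3) * integralOn (-1) 1 ((1 - X ^ 2) ^ (n + 1)) =
      (2 * n + 2) * integralOn (-1) 1 ((1 - X ^ 2) ^ n) := by
  have hderiv : derivative (X * (1 - X ^ 2) ^ (n + 1)) =
      (2 * n + 3 : ℝ) • (1 - X ^ 2) ^ (n + 1) - (2 * n + 2 : ℝ) • (1 - X ^ 2 : ℝ[X]) ^ n := by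
    simp only [derivative_mul, derivative_pow, derivative_X, derivative_sub, derivative_one,
      smul_eq_C_mul, map_add, map_mul, map_natCast, map_ofNat]
    push_cast
    ring
  have h := integralOn_derivative (-1) 1 (X * (1 - X ^ 2) ^ (n + 1))
  rw [hderiv, map_sub, map_smul, map_smul] at h
  norm_num at h
  linarith

theorem factorial_mul_integralOn_one_sub_X_sq_pow (n : ℕ) :
    ((2 * n + 1) ! : ℝ) * integralOn (-1) 1 ((1 - X ^ 2) ^ n) = 2 * 4 ^ n * (n ! : ℝ) ^ 2 := by
  induction n with
  | zero => norm_num [integralOn_apply]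
  | succ n ih =>
    have h := integralOn_one_sub_X_sq_pow_succ n
    have hfac : ((2 * (n + 1) + 1) ! : ℝ) = (2 * n + 3) * (2 * n + 2) * (2 * n + 1) ! := by
      rw [show 2 * (n + 1) + 1 = (2 * n + 1) + 1 + 1 by ring, Nat.factorial_succ,
        Nat.factorial_succ]
      push_cast
      ring
    rw [hfac, Nat.factorial_succ n]
    push_cast
    linear_combination (2 * (n : ℝ) + 2) * ((2 * n + 1) ! : ℝ) * h + (2 * (n : ℝ) + 2) ^ 2 * ih

noncomputable def legendre (n : ℕ) : ℝ[X] :=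
  C (2 ^ n * n ! : ℝ)⁻¹ * derivative^[n] ((X ^ 2 - 1) ^ n)

theorem degree_legendre (n : ℕ) : (legendre n).degree = n := by
  rw [legendre, degree_C_mul (by positivity), (monic_X_sq_sub_one.pow n).degree_iterate_derivative,
    natDegree_X_sq_sub_one_pow]
  · congr; omega
  · rw [natDegree_X_sq_sub_one_pow]; omega

theorem natDegree_legendre (n : ℕ) : (legendre n).natDegree = n :=
  natDegree_eq_of_degree_eq_some (degree_legendre n)

theorem legendre_eval_one (n : ℕ) : (legendre n).eval 1 = 1 := by
  have h : (X ^ 2 - 1 : ℝ[X]) ^ n = (X - C 1) ^ n * (X + 1) ^ n := by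
    rw [← mul_pow, C_1]; ring
  rw [legendre, eval_mul, eval_C, h, eval_iterate_derivative_X_sub_C_pow_mul, eval_pow, eval_add,
    eval_X, eval_one, one_add_one_eq_two, mul_comm (n ! : ℝ), inv_mul_cancel₀ (by positivity)]

theorem integralOn_legendre_mul (n : ℕ) (q : ℝ[X]) :
    integralOn (-1) 1 (legendre n * q) =
      (-1) ^ n / (2 ^ n * n !) * integralOn (-1) 1 ((X ^ 2 - 1) ^ n * derivative^[n] q) := by
  have hboundary : ∀ k < n, (derivative^[k] ((X ^ 2 - 1 : ℝ[X]) ^ n)).eval (-1) = 0 ∧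
      (derivative^[k] ((X ^ 2 - 1 : ℝ[X]) ^ n)).eval 1 = 0 := fun k hk =>
    ⟨eval_iterate_derivative_X_sq_sub_one_pow hk (by norm_num),
      eval_iterate_derivative_X_sq_sub_one_pow hk (by norm_num)⟩
  rw [legendre, mul_assoc, ← smul_eq_C_mul, map_smul, integralOn_iterate_derivative_mul hboundary,
    smul_eq_mul]
  ring

theorem integralOn_legendre_mul_eq_zero {n : ℕ} {q : ℝ[X]} (hq : q.natDegree < n) :
    integralOn (-1) 1 (legendre n * q) = 0 := by
  rw [integralOn_legendre_mul, iterate_derivative_eq_zero hq, mul_zero, map_zero, mul_zero]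

theorem isOrthoᵢ_legendre : (l2Form (-1) 1).IsOrthoᵢ legendre := by
  intro i j hij
  rw [Function.onFun, l2Form_apply]
  rcases hij.lt_or_gt with h | h
  · rw [mul_comm]
    exact integralOn_legendre_mul_eq_zero (by rwa [natDegree_legendre])
  · exact integralOn_legendre_mul_eq_zero (by rwa [natDegree_legendre])

theorem l2Form_legendre_self (n : ℕ) :
    l2Form (-1) 1 (legendre n) (legendre n) = 2 / (2 * n + 1) := by
  have htop : derivative^[n] (legendre n) = C ((2 ^ n * n ! : ℝ)⁻¹ * (2 * n) !) := by
    rw [legendre, iterate_derivative_C_mul, ← Function.iterate_add_apply, ← two_mul,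
      ← natDegree_X_sq_sub_one_pow (R := ℝ),
      (monic_X_sq_sub_one.pow n).iterate_derivative_natDegree, natDegree_X_sq_sub_one_pow, C_mul]
  have hsign : (X ^ 2 - 1 : ℝ[X]) ^ n = (-1 : ℝ) ^ n • (1 - X ^ 2) ^ n := by
    rw [smul_eq_C_mul, map_pow, map_neg, map_one, ← mul_pow]
    ring
  have hfac : ((2 * n + 1) ! : ℝ) = (2 * n + 1) * (2 * n) ! := by
    rw [Nat.factorial_succ]; push_cast; ring
  have hJ := factorial_mul_integralOn_one_sub_X_sq_pow n
  rw [hfac] at hJ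
  have h4 : (4 : ℝ) ^ n = (2 ^ n) ^ 2 := by rw [← pow_mul, pow_mul']; norm_num
  have hsign_sq : ((-1 : ℝ) ^ n) ^ 2 = 1 := by rw [← pow_mul, pow_mul', neg_one_sq, one_pow]
  rw [l2Form_apply, integralOn_legendre_mul, htop, mul_comm _ (C _), ← smul_eq_C_mul, map_smul,
    hsign, map_smul, smul_eq_mul, smul_eq_mul]
  field_simp
  rw [hsign_sq]
  linear_combination hJ + 2 * (n ! : ℝ) ^ 2 * h4

theorem exists_eq_sum_smul_legendre {N : ℕ} {p : ℝ[X]} (hp : p.degree ≤ N) :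
    ∃ c : ℕ → ℝ, ∑ k ∈ Finset.range (N + 1), c k • legendre k = p := by
  let S : Sequence ℝ := ⟨legendre, degree_legendre⟩
  have hspan := S.span_degreeLT (m := N + 1) fun i _ =>
    (leadingCoeff_ne_zero.mpr (S.ne_zero i)).isUnit
  rw [← Finset.coe_range, degreeLT_succ_eq_degreeLE] at hspan
  exact (Submodule.mem_span_image_finset_iff_exists_fun' ℝ).mp (hspan ▸ mem_degreeLE.mpr hp)

end Polynomial

/-- Polynomial inverse trace inequality: for every polynomial `p` of degree at
most `N`, `|p(1)|² ≤ ((N+1)²/2)·∫_{-1}^1 p(x)² dx`. -/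
theorem polynomial_inverse_trace_inequality :
    ∀ (N : ℕ) (p : Polynomial ℝ), p.degree ≤ N →
      (p.eval 1) ^ 2 ≤ (((N : ℝ) + 1) ^ 2 / 2) * ∫ x in (-1 : ℝ)..1, (p.eval x) ^ 2 := by
  intro N p hp
  obtain ⟨c, rfl⟩ := exists_eq_sum_smul_legendre hp
  set s := Finset.range (N + 1)
  have heval : (∑ k ∈ s, c k • legendre k).eval 1 = ∑ k ∈ s, c k := by
    simp [eval_finsetSum, legendre_eval_one]
  have hnorm : ∫ x in (-1 : ℝ)..1, ((∑ k ∈ s, c k • legendre k).eval x) ^ 2 =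
      ∑ k ∈ s, c k ^ 2 / ((2 * k + 1) / 2) := by
    simp only [sq, ← eval_mul, ← integralOn_apply, ← l2Form_apply,
      isOrthoᵢ_legendre.apply_sum_smul_sum_smul, l2Form_legendre_self]
    exact Finset.sum_congr rfl fun k _ => by rw [div_div_eq_mul_div, mul_div_assoc]
  have hcs := Finset.sq_sum_div_le_sum_sq_div s c (g := fun k : ℕ => (2 * k + 1 : ℝ) / 2)
    fun k _ => by positivity
  rw [Finset.sum_range_two_mul_add_one_div_two, div_le_iff₀ (by positivity)] at hcs
  push_cast at hcs
  rw [heval, hnorm]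
  linarith
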